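/- arXiv:1002.3129 — 2 statements merged into one kernel-verified Lean document; each statement's English description precedes it below -/
import Mathlib

section
/- Let A be a hyperplane arrangement in ℂⁿ. Then there exists a finite open cover U of ℂⁿ by convex sets, each of which is small with respect to A, such that U is closed under taking nonempty intersections (i.e., the intersection of any two members of U is either empty or again a member of U). -/
open Set Pointwise

/-- An affine complex hyperplane in `ℂⁿ`: a level set of a nonzero linear functional. -/
def IsAffineHyperplane {n : ℕ} (H : Set (Fin n → ℂ)) : Prop :=
  ∃ (f : (Fin n → ℂ) →ₗ[ℂ] ℂ) (c : ℂ), f ≠ 0 ∧ H = {x | f x = c}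

/-- A hyperplane arrangement in `ℂⁿ`: a finite set of affine hyperplanes. -/
def IsArrangement {n : ℕ} (A : Set (Set (Fin n → ℂ))) : Prop :=
  A.Finite ∧ ∀ H ∈ A, IsAffineHyperplane H

/-- The intersection poset `L(B)`: all nonempty intersections of nonempty subfamilies of `B`. -/
def interPoset {n : ℕ} (B : Set (Set (Fin n → ℂ))) : Set (Set (Fin n → ℂ)) :=
  {G | G.Nonempty ∧ ∃ S, S ⊆ B ∧ S.Nonempty ∧ G = ⋂₀ S}

/-- The complex dimension of a subset of `ℂⁿ` (the dimension of its affine span). -/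
noncomputable def adim {n : ℕ} (G : Set (Fin n → ℂ)) : ℕ :=
  Module.finrank ℂ (affineSpan ℂ G).direction

/-- `G` is an inclusion-minimal element of the intersection poset of `B`. -/
def IsMinimalSubspace {n : ℕ} (B : Set (Set (Fin n → ℂ))) (G : Set (Fin n → ℂ)) : Prop :=
  G ∈ interPoset B ∧ ∀ G' ∈ interPoset B, G' ⊆ G → G' = G

/-- The arrangement `B`, inside an ambient space of dimension `d`, has rank `l`:
minimal elements of the intersection poset exist and each has codimension `l`;
the empty arrangement has rank `0`. -/
def HasRankIn {n : ℕ} (d : ℕ) (B : Set (Set (Fin n → ℂ))) (l : ℕ) : Prop :=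
  (B.Nonempty → (∃ G, IsMinimalSubspace B G) ∧ ∀ G, IsMinimalSubspace B G → adim G + l = d) ∧
  (B = ∅ → l = 0)

/-- The arrangement `A` in `ℂⁿ` has rank `l`. -/
abbrev HasRank {n : ℕ} (A : Set (Set (Fin n → ℂ))) (l : ℕ) : Prop := HasRankIn n A l

/-- `L̄(A) = L(A) ∪ {ℂⁿ}`. -/
def interPosetBar {n : ℕ} (A : Set (Set (Fin n → ℂ))) : Set (Set (Fin n → ℂ)) :=
  insert Set.univ (interPoset A)

/-- An open convex subset `U` of `ℂⁿ` is small with respect to `A` if the family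
`{G ∈ L̄(A) : G ∩ U ≠ ∅}` has a unique minimum (i.e. a least element) under inclusion. -/
def IsSmall {n : ℕ} (A : Set (Set (Fin n → ℂ))) (U : Set (Fin n → ℂ)) : Prop :=
  ∃ G₀ : Set (Fin n → ℂ), IsLeast {G | G ∈ interPosetBar A ∧ (G ∩ U).Nonempty} G₀

/-!
Split every hyperplane `{f = c}` into the two real equations `re (f - c) = 0`, `im (f - c) = 0`.
For the resulting finite family of real affine functions `gᵢ`, take as cover the open stars
`St(x) = {y | gᵢ y has the sign of gᵢ x whenever gᵢ x ≠ 0}`. They are finitely many (`St(x)` only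
depends on the sign vector of `x`), open and convex (finite intersections of open half-spaces).
A hyperplane through a point of `St(x)` passes through `x`, so `St(x)` is small, with least
element the intersection of the hyperplanes through `x`. If `St(x) ∩ St(y)` is nonempty, no `gᵢ`
takes opposite signs at `x` and `y`, so the sign vector of the midpoint of `x` and `y` is the
join of theirs and `St(x) ∩ St(y) = St(midpoint x y)`.
-/

section OpenStar

variable {E ι : Type*} [AddCommGroup E] [Module ℝ E] (g : ι → E →ᵃ[ℝ] ℝ)

def signRegion (P N : Set ι) : Set E :=
  {y | (∀ i ∈ P, 0 < g i y) ∧ ∀ i ∈ N, g i y < 0}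

def openStar (x : E) : Set E :=
  signRegion g {i | 0 < g i x} {i | g i x < 0}

theorem signRegion_eq_biInter (P N : Set ι) :
    signRegion g P N = (⋂ i ∈ P, g i ⁻¹' Ioi 0) ∩ ⋂ i ∈ N, g i ⁻¹' Iio 0 := by
  ext y
  simp [signRegion]

theorem convex_signRegion (P N : Set ι) : Convex ℝ (signRegion g P N) := by
  rw [signRegion_eq_biInter]
  exact (convex_iInter₂ fun i _ => (convex_Ioi 0).affine_preimage (g i)).inter
    (convex_iInter₂ fun i _ => (convex_Iio 0).affine_preimage (g i))

theorem isOpen_signRegion [Finite ι] [TopologicalSpace E] (hg : ∀ i, Continuous (g i))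
    (P N : Set ι) : IsOpen (signRegion g P N) := by
  rw [signRegion_eq_biInter]
  exact (P.toFinite.isOpen_biInter fun i _ => isOpen_Ioi.preimage (hg i)).inter
    (N.toFinite.isOpen_biInter fun i _ => isOpen_Iio.preimage (hg i))

theorem signRegion_inter_signRegion (P N P' N' : Set ι) :
    signRegion g P N ∩ signRegion g P' N' = signRegion g (P ∪ P') (N ∪ N') := by
  ext y
  simp only [signRegion, mem_inter_iff, mem_ofPred_eq, mem_union]
  grind

theorem mem_openStar_self (x : E) : x ∈ openStar g x :=
  ⟨fun _ hi => hi, fun _ hi => hi⟩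

theorem finite_range_openStar [Finite ι] : (range (openStar g)).Finite :=
  (finite_range fun PN : Set ι × Set ι => signRegion g PN.1 PN.2).subset <| by
    rintro _ ⟨x, rfl⟩
    exact ⟨(_, _), rfl⟩

theorem eq_zero_of_mem_openStar {x y : E} (hy : y ∈ openStar g x) {i : ι} (hi : g i y = 0) :
    g i x = 0 := by
  by_contra hx
  rcases lt_or_gt_of_ne hx with hneg | hpos
  · exact (hy.2 i hneg).ne hi
  · exact (hy.1 i hpos).ne' hi

theorem openStar_inter_openStar {x y : E} (h : (openStar g x ∩ openStar g y).Nonempty) :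
    openStar g x ∩ openStar g y = openStar g (midpoint ℝ x y) := by
  obtain ⟨z, hzx, hzy⟩ := h
  have hmid : ∀ i, g i (midpoint ℝ x y) = (g i x + g i y) / 2 := fun i => by
    rw [(g i).map_midpoint, midpoint_eq_smul_add, smul_eq_mul, invOf_eq_inv]
    ring
  -- `z` rules out opposite signs of `g i` at `x` and `y`
  have hxy : ∀ i, 0 < g i x → ¬ g i y < 0 := fun i hx hy =>
    (hzx.1 i hx).not_gt (hzy.2 i hy)
  have hyx : ∀ i, 0 < g i y → ¬ g i x < 0 := fun i hy hx =>
    (hzy.1 i hy).not_gt (hzx.2 i hx)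
  rw [openStar, openStar, signRegion_inter_signRegion, openStar]
  congr 1 <;> ext i <;> simp only [mem_ofPred_eq, mem_union, hmid] <;>
    grind [hxy i, hyx i]

end OpenStar

theorem IsAffineHyperplane.exists_eq_zeroSet {n : ℕ} {H : Set (Fin n → ℂ)}
    (hH : IsAffineHyperplane H) :
    ∃ g : Fin 2 → (Fin n → ℂ) →ᵃ[ℝ] ℝ, H = {y | ∀ j, g j y = 0} := by
  obtain ⟨f, c, -, rfl⟩ := hH
  let φ : (Fin n → ℂ) →ᵃ[ℝ] ℂ := (f.restrictScalars ℝ).toAffineMap - AffineMap.const ℝ _ c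
  refine ⟨![Complex.reLm.toAffineMap.comp φ, Complex.imLm.toAffineMap.comp φ], ?_⟩
  ext y
  simp [φ, Fin.forall_fin_two, Complex.ext_iff, sub_eq_zero]

theorem isSmall_of_forall_mem {n : ℕ} {A : Set (Set (Fin n → ℂ))} {U : Set (Fin n → ℂ)}
    {x : Fin n → ℂ} (hx : x ∈ U) (hA : ∀ H ∈ A, (H ∩ U).Nonempty → x ∈ H) : IsSmall A U := by
  set Z := {H ∈ A | x ∈ H}
  have hxZ : x ∈ ⋂₀ Z := fun H hH => hH.2
  refine ⟨⋂₀ Z, ⟨?_, x, hxZ, hx⟩, ?_⟩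
  · rcases Z.eq_empty_or_nonempty with hZ | hZ
    · rw [hZ, sInter_empty]
      exact mem_insert _ _
    · exact mem_insert_of_mem _ ⟨⟨x, hxZ⟩, Z, fun H hH => hH.1, hZ, rfl⟩
  · rintro G ⟨rfl | ⟨-, S, hSA, -, rfl⟩, y, hyG, hyU⟩
    · exact subset_univ _
    · exact sInter_subset_sInter fun H hH => ⟨hSA hH, hA H (hSA hH) ⟨y, hyG H hH, hyU⟩⟩

theorem isSmall_openStar {n : ℕ} {ι : Type*} (A : Set (Set (Fin n → ℂ)))
    (g : ι → (Fin n → ℂ) →ᵃ[ℝ] ℝ) (hA : ∀ H ∈ A, ∃ J : Set ι, H = {y | ∀ j ∈ J, g j y = 0})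
    (x : Fin n → ℂ) : IsSmall A (openStar g x) := by
  refine isSmall_of_forall_mem (mem_openStar_self g x) fun H hH ⟨y, hyH, hyU⟩ => ?_
  obtain ⟨J, rfl⟩ := hA H hH
  exact fun j hj => eq_zero_of_mem_openStar g hyU (hyH j hj)

/-- `ℂⁿ` admits a finite open cover by convex sets, each small with respect to `A`, which is
closed under nonempty intersections. -/
theorem exists_finite_small_convex_cover {n : ℕ} (A : Set (Set (Fin n → ℂ)))
    (hA : IsArrangement A) :
    ∃ 𝒰 : Set (Set (Fin n → ℂ)),
      𝒰.Finite ∧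
      ⋃₀ 𝒰 = Set.univ ∧
      (∀ U ∈ 𝒰, IsOpen U ∧ Convex ℝ U ∧ IsSmall A U) ∧
      (∀ U ∈ 𝒰, ∀ V ∈ 𝒰, (U ∩ V).Nonempty → U ∩ V ∈ 𝒰) := by
  obtain ⟨hfin, hhyp⟩ := hA
  have : Finite A := hfin.to_subtype
  choose g hg using fun H : A => (hhyp H H.2).exists_eq_zeroSet
  let G : A × Fin 2 → (Fin n → ℂ) →ᵃ[ℝ] ℝ := fun p => g p.1 p.2
  have hGA : ∀ H ∈ A, ∃ J : Set (A × Fin 2), H = {y | ∀ j ∈ J, G j y = 0} := fun H hH =>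
    ⟨range (Prod.mk ⟨H, hH⟩), by simpa only [forall_mem_range] using hg ⟨H, hH⟩⟩
  refine ⟨range (openStar G), finite_range_openStar G,
    sUnion_eq_univ_iff.2 fun x => ⟨_, mem_range_self x, mem_openStar_self G x⟩, ?_, ?_⟩
  · rintro _ ⟨x, rfl⟩
    exact ⟨isOpen_signRegion G (fun p => (G p).continuous_of_finiteDimensional) _ _,
      convex_signRegion G _ _, isSmall_openStar A G hGA x⟩
  · rintro _ ⟨x, rfl⟩ _ ⟨y, rfl⟩ hxy
    exact ⟨midpoint ℝ x y, (openStar_inter_openStar G hxy).symm⟩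
end

section
/- Let A be a hyperplane arrangement in ℂⁿ and let U be a nonempty open convex subset of ℂⁿ that is small with respect to A, with G = Min(U). Then the set U ∖ Σ(A) is homotopy equivalent to M(A_G) = ℂⁿ ∖ Σ(A_G), the complement of the central arrangement A_G of hyperplanes of A containing G. -/
/-!
Every hyperplane of `A` meeting `U` contains `G = Min(U)`, so `U ∖ Σ(A) = U ∩ M(A_G)`. Fix
`p ∈ G ∩ U`. All hyperplanes of `A_G` pass through `p`, so `M(A_G)` is invariant under the
homotheties with centre `p` and positive real ratio. Moving `x` towards `p` by the ratio
`1 / (1 + t μ(x - p))`, where `μ` is the gauge of `U - p`, is a deformation of `ℂⁿ` through such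
homotheties of ratio at most `1`; it therefore preserves `M(A_G)` and the star-shaped set `U`, and at
time `1` it maps all of `ℂⁿ` into `U`. Hence `U ∩ M(A_G) ↪ M(A_G)` is a homotopy equivalence.
-/

open Set Pointwise

section Deformation

variable {X : Type*} [TopologicalSpace X] (H : C(unitInterval × X, X))

def ContinuousMap.Homotopy.restrictOfMapsTo {W : Set X} (hW : ∀ t, ∀ x ∈ W, H (t, x) ∈ W)
    (h₀ : ∀ x ∈ W, H (0, x) = x) :
    ContinuousMap.Homotopy (ContinuousMap.id W) ⟨fun x => ⟨H (1, x), hW 1 x x.2⟩, by fun_prop⟩ where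
  toFun q := ⟨H (q.1, q.2), hW q.1 q.2 q.2.2⟩
  map_zero_left x := Subtype.ext (h₀ x x.2)
  map_one_left _ := rfl

theorem nonempty_homotopyEquiv_of_deformation {Y Z : Set X} (hYZ : Y ⊆ Z)
    (h₀ : ∀ x ∈ Z, H (0, x) = x) (h₁ : ∀ x ∈ Z, H (1, x) ∈ Y)
    (hY : ∀ t, ∀ x ∈ Y, H (t, x) ∈ Y) (hZ : ∀ t, ∀ x ∈ Z, H (t, x) ∈ Z) :
    Nonempty (ContinuousMap.HomotopyEquiv Y Z) :=
  ⟨{ toFun := ⟨inclusion hYZ, continuous_inclusion hYZ⟩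
     invFun := ⟨fun x => ⟨H (1, x), h₁ x x.2⟩, by fun_prop⟩
     left_inv := ⟨(ContinuousMap.Homotopy.restrictOfMapsTo H hY fun x hx => h₀ x (hYZ hx)).symm⟩
     right_inv := ⟨(ContinuousMap.Homotopy.restrictOfMapsTo H hZ h₀).symm⟩ }⟩

end Deformation

section Radial

variable {E : Type*} [AddCommGroup E] [Module ℝ E] [TopologicalSpace E] [IsTopologicalAddGroup E]
  [ContinuousSMul ℝ E]

theorem IsOpen.exists_radial_deformation {U : Set E} (hUo : IsOpen U) (hUc : Convex ℝ U) {p : E}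
    (hp : p ∈ U) :
    ∃ H : C(unitInterval × E, E), (∀ x, H (0, x) = x) ∧ (∀ x, H (1, x) ∈ U) ∧
      ∀ t x, ∃ s ∈ Ioc (0 : ℝ) 1, H (t, x) = p + s • (x - p) := by
  set V := (p + ·) ⁻¹' U
  have hVo : IsOpen V := hUo.preimage (continuous_const_add p)
  have hV : V ∈ nhds 0 := hVo.mem_nhds (by simpa [V])
  have hVc : Convex ℝ V := hUc.translate_preimage_right p
  have hle : ∀ (t : unitInterval) x, 1 ≤ 1 + t * gauge V (x - p) := fun t x =>
    le_add_of_nonneg_right (mul_nonneg t.2.1 (gauge_nonneg _))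
  have hpos : ∀ (t : unitInterval) x, 0 < 1 + t * gauge V (x - p) := fun t x =>
    zero_lt_one.trans_le (hle t x)
  let s : unitInterval × E → ℝ := fun q => (1 + q.1 * gauge V (q.2 - p))⁻¹
  have hs : Continuous s :=
    (continuous_const.add ((by fun_prop : Continuous fun q : unitInterval × E => (q.1 : ℝ)).mul
      ((continuous_gauge hVc hV).comp (by fun_prop)))).inv₀ fun q => (hpos q.1 q.2).ne'
  refine ⟨⟨fun q => p + s q • (q.2 - p), by fun_prop⟩, fun x => by simp [s], fun x => ?_,
    fun t x => ⟨s (t, x), ⟨inv_pos.2 (hpos t x), ?_⟩, rfl⟩⟩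
  · have hg : gauge V (s (1, x) • (x - p)) < 1 := by
      rw [gauge_smul_of_nonneg (inv_pos.2 (hpos 1 x)).le, smul_eq_mul, inv_mul_lt_one₀ (hpos 1 x)]
      simp
    simpa [V, hVo.interior_eq] using (gauge_lt_one_iff_mem_interior hVc hV).1 hg
  · exact inv_le_one_of_one_le₀ (hle t x)

end Radial

section Arrangement

variable {n : ℕ}

theorem IsAffineHyperplane.add_smul_sub_mem_iff {H : Set (Fin n → ℂ)} (hH : IsAffineHyperplane H)
    {p : Fin n → ℂ} (hp : p ∈ H) {s : ℝ} (hs : s ≠ 0) (x : Fin n → ℂ) :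
    p + s • (x - p) ∈ H ↔ x ∈ H := by
  obtain ⟨f, c, -, rfl⟩ := hH
  simp only [mem_ofPred_eq] at hp ⊢
  rw [map_add, LinearMap.map_smul_of_tower, map_sub, hp, add_eq_left, smul_eq_zero, sub_eq_zero]
  exact or_iff_right hs

theorem add_smul_sub_mem_compl_sUnion {B : Set (Set (Fin n → ℂ))} {p : Fin n → ℂ}
    (hB : ∀ H ∈ B, IsAffineHyperplane H ∧ p ∈ H) {s : ℝ} (hs : s ≠ 0) {x : Fin n → ℂ}
    (hx : x ∈ (⋃₀ B)ᶜ) : p + s • (x - p) ∈ (⋃₀ B)ᶜ := by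
  rintro ⟨H, hHB, hxH⟩
  exact hx ⟨H, hHB, ((hB H hHB).1.add_smul_sub_mem_iff (hB H hHB).2 hs x).1 hxH⟩

theorem mem_interPoset_of_mem {B : Set (Set (Fin n → ℂ))} {H : Set (Fin n → ℂ)} (hH : H ∈ B)
    (hne : H.Nonempty) : H ∈ interPoset B :=
  ⟨hne, {H}, singleton_subset_iff.2 hH, singleton_nonempty H, (sInter_singleton H).symm⟩

theorem diff_sUnion_eq_inter_compl_of_isLeast {A : Set (Set (Fin n → ℂ))} {U G : Set (Fin n → ℂ)}
    (hG : IsLeast {G' | G' ∈ interPosetBar A ∧ (G' ∩ U).Nonempty} G) :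
    U \ ⋃₀ A = U ∩ (⋃₀ {H | H ∈ A ∧ G ⊆ H})ᶜ := by
  ext x
  simp only [mem_sdiff, mem_inter_iff, mem_compl_iff, mem_sUnion, mem_ofPred_eq, not_exists,
    not_and, and_congr_right_iff]
  refine fun hxU => ⟨fun hx H hH => hx H hH.1, fun hx H hH hxH => hx H ⟨hH, ?_⟩ hxH⟩
  exact hG.2 ⟨Or.inr (mem_interPoset_of_mem hH ⟨x, hxH⟩), x, hxH, hxU⟩

end Arrangement

theorem small_set_complement_homotopyEquiv_general {n : ℕ} (A : Set (Set (Fin n → ℂ)))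
    (hA : IsArrangement A) (U : Set (Fin n → ℂ))
    (hUopen : IsOpen U) (hUconv : Convex ℝ U) (G : Set (Fin n → ℂ))
    (hG : IsLeast {G' | G' ∈ interPosetBar A ∧ (G' ∩ U).Nonempty} G) :
    Nonempty
      (ContinuousMap.HomotopyEquiv (↥(U \ ⋃₀ A : Set (Fin n → ℂ)))
        (↥((⋃₀ {H | H ∈ A ∧ G ⊆ H})ᶜ : Set (Fin n → ℂ)))) := by
  obtain ⟨p, hpG, hpU⟩ := hG.1.2
  obtain ⟨F, hF₀, hF₁, hFray⟩ := hUopen.exists_radial_deformation hUconv hpU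
  set M := (⋃₀ {H | H ∈ A ∧ G ⊆ H})ᶜ
  have hFM : ∀ t, ∀ x ∈ M, F (t, x) ∈ M := fun t x hx => by
    obtain ⟨s, hs, hFs⟩ := hFray t x
    exact hFs ▸ add_smul_sub_mem_compl_sUnion (fun H hH => ⟨hA.2 H hH.1, hH.2 hpG⟩) hs.1.ne' hx
  have hFU : ∀ t, ∀ x ∈ U, F (t, x) ∈ U := fun t x hx => by
    obtain ⟨s, hs, hFs⟩ := hFray t x
    exact hFs ▸ hUconv.add_smul_sub_mem hpU hx (Ioc_subset_Icc_self hs)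
  rw [diff_sUnion_eq_inter_compl_of_isLeast hG]
  exact nonempty_homotopyEquiv_of_deformation F inter_subset_right (fun x _ => hF₀ x)
    (fun x hx => ⟨hF₁ x, hFM 1 x hx⟩) (fun t x hx => ⟨hFU t x hx.1, hFM t x hx.2⟩) hFM

/-- If `U` is a nonempty small open convex set with `G = Min(U)`, then `U ∖ Σ(A)` is homotopy
equivalent to the complement `M(A_G)` of the central arrangement `A_G` of hyperplanes of `A`
containing `G`. -/
theorem small_set_complement_homotopyEquiv {n : ℕ} (A : Set (Set (Fin n → ℂ)))
    (hA : IsArrangement A) (U : Set (Fin n → ℂ)) (hUne : U.Nonempty)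
    (hUopen : IsOpen U) (hUconv : Convex ℝ U) (G : Set (Fin n → ℂ))
    (hG : IsLeast {G' | G' ∈ interPosetBar A ∧ (G' ∩ U).Nonempty} G) :
    Nonempty
      (ContinuousMap.HomotopyEquiv (↥(U \ ⋃₀ A : Set (Fin n → ℂ)))
        (↥((⋃₀ {H | H ∈ A ∧ G ⊆ H})ᶜ : Set (Fin n → ℂ)))) :=
  small_set_complement_homotopyEquiv_general A hA U hUopen hUconv G hG
end
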